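/- Let d ≥ 1 and q ≥ 1. If every continuous map g : Δ_d^{(d+2)(q-1)} → ℝ^{d+1} admits a winding partition (in dimension d+1), then every continuous map f : Δ_{d-1}^{(d+1)(q-1)} → ℝ^d admits a winding partition (in dimension d). -/

import Mathlib

open scoped BigOperators

noncomputable section

/-- Euclidean space `ℝ^d`. -/
abbrev Euc (d : ℕ) : Type := EuclideanSpace ℝ (Fin d)

/-- The standard `N`-simplex `Δ^N ⊆ ℝ^{N+1}`. -/
def stdSimp (N : ℕ) : Set (Fin (N+1) → ℝ) :=
  {x | (∀ i, 0 ≤ x i) ∧ ∑ i, x i = 1}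

/-- The face `σ_S` of `Δ^N` spanned by the vertices in `S`. -/
def simpFace {N : ℕ} (S : Finset (Fin (N+1))) : Set (Fin (N+1) → ℝ) :=
  {x ∈ stdSimp N | ∀ i ∉ S, x i = 0}

/-- The `k`-skeleton `Δ_k^N` of the standard `N`-simplex. -/
def skel (N k : ℕ) : Set (Fin (N+1) → ℝ) :=
  {x ∈ stdSimp N | {i | x i ≠ 0}.ncard ≤ k + 1}

/-- A Tverberg partition for (the relevant restriction of) `f`: a set of `q`
pairwise disjoint nonempty vertex subsets whose faces have images with a common point. -/
def IsTverbergPartition (q : ℕ) {N d : ℕ}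
    (f : (Fin (N+1) → ℝ) → Euc d) (P : Finset (Finset (Fin (N+1)))) : Prop :=
  P.card = q ∧ (∀ S ∈ P, S.Nonempty) ∧
  (∀ S ∈ P, ∀ T ∈ P, S ≠ T → Disjoint S T) ∧
  (⋂ S ∈ P, f '' simpFace S).Nonempty

/-- The boundary `∂σ_S` of the face `σ_S`. -/
def simpFaceBoundary {N : ℕ} (S : Finset (Fin (N+1))) : Set (Fin (N+1) → ℝ) :=
  {x ∈ simpFace S | ∃ i ∈ S, x i = 0}

/-- `p ∈ W_{≠0}(f|_{∂σ_S})`: either `p` is in the image of the boundary, or the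
corestriction of `f|_{∂σ_S}` to `ℝ^d \ {p}` is not nullhomotopic (there is no
continuous map agreeing with `f` on `∂σ_S` that is homotopic to a constant). -/
def InWne (d : ℕ) {N : ℕ} (f : (Fin (N+1) → ℝ) → Euc d)
    (S : Finset (Fin (N+1))) (p : Euc d) : Prop :=
  p ∈ f '' simpFaceBoundary S ∨
  ¬ ∃ (g : C(↥(simpFaceBoundary S), ↥({p}ᶜ : Set (Euc d))))
      (y : ↥({p}ᶜ : Set (Euc d))),
      (∀ x : ↥(simpFaceBoundary S), (g x : Euc d) = f ↑x) ∧
      g.Homotopic (ContinuousMap.const _ y)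

/-- A winding partition (in dimension `d`) for `f` defined on the `(d-1)`-skeleton:
`q` pairwise disjoint nonempty vertex subsets, each of size at most `d+1`, together
with a winding point `p`. -/
def IsWindingPartition (d q : ℕ) {N : ℕ}
    (f : (Fin (N+1) → ℝ) → Euc d) (P : Finset (Finset (Fin (N+1)))) : Prop :=
  P.card = q ∧ (∀ S ∈ P, S.Nonempty) ∧ (∀ S ∈ P, S.card ≤ d + 1) ∧
  (∀ S ∈ P, ∀ T ∈ P, S ≠ T → Disjoint S T) ∧
  ∃ p : Euc d, ∀ S ∈ P,
    (S.card ≤ d → p ∈ f '' simpFace S) ∧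
    (S.card = d + 1 → InWne d f S p)


/-!
Put `N = (d+1)(q-1)` and `M = (d+2)(q-1)`, and view `Δ^N` as the face of `Δ^M` spanned by the
image of `ι : Fin (N+1) ↪ Fin (M+1)` (the old vertices); the remaining `q-1` vertices are new.
For `x ∈ Δ^M` let `t` (`newMass`) be its mass on the new vertices and `μ` (`cutoff`) its
`(d+1)`-st largest old coordinate. Lowering the old coordinates by `μ` and clamping at `0` leaves
a vector `y` with at most `d` nonzero entries, so `y / s`, `s = ∑ y`, lies in the
`(d-1)`-skeleton of `Δ^N`. The map `g x = (s • f (y / s), t - μ) ∈ ℝ^d × ℝ` is continuous because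
`f` is bounded, and on the `d`-skeleton of `Δ^M` its height `t - μ` vanishes only where
`t = μ = 0`, where `g x = (f x, 0)`.

Let `p` be the winding point of a winding partition of `g`. If the height has a sign on the face
of a part, `p` has that sign too, since otherwise `g` could be contracted in a half-space missing
`p`. There are fewer new vertices than parts, so some part consists of old vertices and the
height is `≤ 0` on its face; and `q (d+1) > N+1`, so some part has at most `d` old vertices and
the height is `≥ 0` on its face. Hence `p = (a, 0)`, and each part `S` yields a part of a winding
partition of `f` at `a` among the old vertices of `S`. A point of height `0` in `g (σ_S ∩ Δ_d^M)`
gives a small face; if `S` has at most `d` or only old vertices, the height has a sign on `σ_S`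
and `g` is contracted in a half-space as before; and if `S` has exactly `d+1` old vertices, a
nullhomotopy of `f` on the boundary of the old face, run to its end where `s ≤ 1/2`, lifts to a
nullhomotopy of `g` on `∂σ_S`.
-/

open Finset

def supportFinset {α : Type*} [Fintype α] (x : α → ℝ) : Finset α := {i | x i ≠ 0}

@[simp]
theorem mem_supportFinset {α : Type*} [Fintype α] {x : α → ℝ} {i : α} :
    i ∈ supportFinset x ↔ x i ≠ 0 := by
  simp [supportFinset]

section Simplex

variable {N : ℕ}

theorem mem_skel_iff {k : ℕ} {x : Fin (N+1) → ℝ} :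
    x ∈ skel N k ↔ x ∈ stdSimp N ∧ #(supportFinset x) ≤ k + 1 := by
  rw [skel, Set.mem_ofPred_eq, ← Set.ncard_coe_finset]
  simp [supportFinset]

theorem mem_simpFace_iff {S : Finset (Fin (N+1))} {x : Fin (N+1) → ℝ} :
    x ∈ simpFace S ↔ x ∈ stdSimp N ∧ supportFinset x ⊆ S := by
  simp only [simpFace, Set.mem_ofPred_eq, Finset.subset_iff, mem_supportFinset]
  exact and_congr_right fun _ => forall_congr' fun i => not_imp_comm

theorem simpFace_subset_skel {k : ℕ} {S : Finset (Fin (N+1))} (hS : #S ≤ k + 1) :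
    simpFace S ⊆ skel N k := fun x hx => by
  rw [mem_simpFace_iff] at hx
  exact mem_skel_iff.2 ⟨hx.1, (card_le_card hx.2).trans hS⟩

theorem simpFaceBoundary_subset_skel {k : ℕ} {S : Finset (Fin (N+1))} (hS : #S ≤ k + 2) :
    simpFaceBoundary S ⊆ skel N k := by
  rintro x ⟨hx, i, hi, hxi⟩
  rw [mem_simpFace_iff] at hx
  refine mem_skel_iff.2 ⟨hx.1, ?_⟩
  have hsub : supportFinset x ⊆ S.erase i := fun j hj =>
    mem_erase.2 ⟨by rintro rfl; simp_all, hx.2 hj⟩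
  have := card_le_card hsub
  rw [card_erase_of_mem hi] at this
  omega

theorem mem_simpFaceBoundary_of_card_lt {S : Finset (Fin (N+1))} {x : Fin (N+1) → ℝ}
    (hx : x ∈ simpFace S) (hcard : #(supportFinset x) < #S) : x ∈ simpFaceBoundary S := by
  obtain ⟨i, hiS, hi⟩ := not_subset.1 fun h => (card_le_card h).not_gt hcard
  exact ⟨hx, i, hiS, by simpa using hi⟩

theorem single_mem_simpFace {S : Finset (Fin (N+1))} {j : Fin (N+1)} (hj : j ∈ S) :
    Pi.single j 1 ∈ simpFace S := by
  refine ⟨⟨fun i => ?_, by simp⟩, fun i hi => by simp [(ne_of_mem_of_not_mem hj hi).symm]⟩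
  by_cases h : i = j <;> simp [h]

theorem supportFinset_nonempty {x : Fin (N+1) → ℝ} (hx : x ∈ stdSimp N) :
    (supportFinset x).Nonempty := by
  obtain ⟨i, -, hi⟩ := exists_ne_zero_of_sum_ne_zero (hx.2.trans_ne one_ne_zero)
  exact ⟨i, mem_supportFinset.2 hi⟩

theorem skel_eq_biUnion (k : ℕ) :
    skel N k = ⋃ S ∈ {S : Finset (Fin (N+1)) | #S ≤ k + 1}, simpFace S := by
  ext x
  simp only [Set.mem_iUnion, Set.mem_ofPred_eq, mem_skel_iff, mem_simpFace_iff, exists_prop]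
  exact ⟨fun h => ⟨_, h.2, h.1, subset_rfl⟩,
    fun ⟨S, hS, hx, hsub⟩ => ⟨hx, (card_le_card hsub).trans hS⟩⟩

theorem isClosed_stdSimp : IsClosed (stdSimp N) := by
  simp only [stdSimp, Set.ofPred_and, Set.ofPred_forall]
  exact (isClosed_iInter fun i => isClosed_le continuous_const (continuous_apply i)).inter
    (isClosed_eq (continuous_finsetSum _ fun i _ => continuous_apply i) continuous_const)

theorem isCompact_stdSimp : IsCompact (stdSimp N) := by
  refine (isCompact_univ_pi fun _ => isCompact_Icc (a := (0 : ℝ)) (b := 1)).of_isClosed_subset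
    isClosed_stdSimp fun x hx i _ => ⟨hx.1 i, ?_⟩
  calc x i ≤ ∑ j, x j := single_le_sum (fun j _ => hx.1 j) (mem_univ i)
    _ = 1 := hx.2

theorem isCompact_skel (k : ℕ) : IsCompact (skel N k) := by
  rw [skel_eq_biUnion]
  refine (Set.toFinite _).isCompact_biUnion fun S _ => isCompact_stdSimp.of_isClosed_subset ?_
    fun _ hx => hx.1
  simp only [simpFace, Set.ofPred_and, Set.ofPred_forall]
  exact isClosed_stdSimp.inter (isClosed_iInter fun i => isClosed_iInter fun _ =>
    isClosed_eq (continuous_apply i) continuous_const)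

end Simplex

section KthLargest

variable {α : Type*} [Fintype α]

/-- The `(k+1)`-st largest value of `x`, counted with multiplicity (so `kthLargest 0 x` is the
maximum): the largest minimum of `x` over a `(k+1)`-element set. It is `0` if `α` has at most
`k` elements. -/
def kthLargest (k : ℕ) (x : α → ℝ) : ℝ :=
  if h : (univ.powersetCard (k + 1) : Finset (Finset α)).Nonempty then
    (univ.powersetCard (k + 1)).attach.sup' (attach_nonempty_iff.2 h) fun T =>
      T.1.inf' (card_pos.1 <| by rw [(mem_powersetCard.1 T.2).2]; omega) x
  else 0

variable {k : ℕ} {x : α → ℝ}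

theorem kthLargest_of_card_le (h : Fintype.card α ≤ k) : kthLargest k x = 0 := by
  rw [kthLargest, dif_neg]
  simpa [powersetCard_nonempty] using h

theorem le_kthLargest {T : Finset α} (hT : #T = k + 1) {r : ℝ} (hr : ∀ j ∈ T, r ≤ x j) :
    r ≤ kthLargest k x := by
  have hmem : T ∈ univ.powersetCard (k + 1) := mem_powersetCard.2 ⟨subset_univ T, hT⟩
  rw [kthLargest, dif_pos ⟨T, hmem⟩, le_sup'_iff]
  exact ⟨⟨T, hmem⟩, mem_attach _ _, le_inf' _ _ hr⟩

theorem exists_kthLargest_le (h : k < Fintype.card α) :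
    ∃ T : Finset α, #T = k + 1 ∧ ∀ j ∈ T, kthLargest k x ≤ x j := by
  have hne : (univ.powersetCard (k + 1) : Finset (Finset α)).Nonempty :=
    powersetCard_nonempty.2 (by simpa using h)
  obtain ⟨T, -, hT⟩ := exists_mem_eq_sup' (attach_nonempty_iff.2 hne)
    (fun T : {T // T ∈ univ.powersetCard (k + 1)} =>
      T.1.inf' (card_pos.1 <| by rw [(mem_powersetCard.1 T.2).2]; omega) x)
  refine ⟨T.1, (mem_powersetCard.1 T.2).2, fun j hj => ?_⟩
  rw [kthLargest, dif_pos hne, hT]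
  exact inf'_le _ hj

theorem card_lt_kthLargest_le : #{j | kthLargest k x < x j} ≤ k := by
  by_contra! h
  obtain ⟨T, hTsub, hT⟩ := exists_subset_card_eq (show k + 1 ≤ #{j | kthLargest k x < x j} by omega)
  have hTne : T.Nonempty := card_pos.1 (by omega)
  refine (le_kthLargest hT (r := T.inf' hTne x) fun j hj => inf'_le x hj).not_gt ?_
  exact (lt_inf'_iff hTne).2 fun j hj => (mem_filter.1 (hTsub hj)).2

theorem kthLargest_nonneg (hx : ∀ j, 0 ≤ x j) : 0 ≤ kthLargest k x := by
  by_cases h : k < Fintype.card α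
  · obtain ⟨T, hT, -⟩ := exists_kthLargest_le (x := x) h
    exact le_kthLargest hT fun j _ => hx j
  · exact (kthLargest_of_card_le (not_lt.1 h)).ge

theorem kthLargest_eq_zero_iff (hx : ∀ j, 0 ≤ x j) :
    kthLargest k x = 0 ↔ #(supportFinset x) ≤ k := by
  refine ⟨fun h0 => ?_, fun h => (kthLargest_nonneg hx).antisymm' ?_⟩
  · by_contra! h
    obtain ⟨T, hTsub, hT⟩ := exists_subset_card_eq (show k + 1 ≤ #(supportFinset x) by omega)
    have hpos : 0 < T.inf' (card_pos.1 (by omega)) x :=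
      (lt_inf'_iff _).2 fun j hj => (hx j).lt_of_ne' (mem_supportFinset.1 (hTsub hj))
    exact (le_kthLargest hT fun j hj => inf'_le x hj).not_gt (h0 ▸ hpos)
  · by_cases hk : k < Fintype.card α
    · obtain ⟨T, hT, hle⟩ := exists_kthLargest_le (x := x) hk
      obtain ⟨j, hjT, hj⟩ := not_subset.1 fun hsub : T ⊆ supportFinset x =>
        (card_le_card hsub).not_gt (by omega)
      simpa [not_not.1 (mem_supportFinset.not.1 hj)] using hle j hjT
    · exact (kthLargest_of_card_le (not_lt.1 hk)).le

theorem continuous_kthLargest : Continuous (kthLargest (α := α) k) := by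
  unfold kthLargest
  split_ifs
  · exact Continuous.finset_sup'_apply _ fun T _ =>
      Continuous.finset_inf'_apply _ fun j _ => continuous_apply j
  · exact continuous_const

end KthLargest

theorem card_mul_le_of_disjoint {α β : Type*} [DecidableEq α] {P : Finset β} {t : β → Finset α}
    {A : Finset α} {k : ℕ} (hdisj : ∀ S ∈ P, ∀ T ∈ P, S ≠ T → Disjoint (t S) (t T))
    (hsub : ∀ S ∈ P, t S ⊆ A) (hk : ∀ S ∈ P, k ≤ #(t S)) : #P * k ≤ #A :=
  calc #P * k ≤ ∑ S ∈ P, #(t S) := by simpa [mul_comm] using card_nsmul_le_sum P _ k hk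
    _ = #(P.biUnion t) := (card_biUnion fun S hS T hT hST => hdisj S hS T hT hST).symm
    _ ≤ #A := card_le_card (biUnion_subset.2 hsub)

namespace Euc

variable {d : ℕ}

def snoc (a : Euc d) (b : ℝ) : Euc (d+1) := WithLp.toLp 2 (Fin.snoc (WithLp.ofLp a) b)

@[simp]
theorem snoc_last (a : Euc d) (b : ℝ) : snoc a b (Fin.last d) = b := by
  simp [snoc]

@[simp]
theorem snoc_castSucc (a : Euc d) (b : ℝ) (i : Fin d) : snoc a b i.castSucc = a i := by
  simp [snoc]

theorem snoc_inj {a a' : Euc d} {b b' : ℝ} : snoc a b = snoc a' b' ↔ a = a' ∧ b = b' := by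
  refine ⟨fun h => ⟨?_, by simpa using congrArg (· (Fin.last d)) h⟩, fun h => h.1 ▸ h.2 ▸ rfl⟩
  ext i
  simpa using congrArg (· i.castSucc) h

theorem exists_eq_snoc (v : Euc (d+1)) : ∃ a, v = snoc a (v (Fin.last d)) :=
  ⟨WithLp.toLp 2 fun i => v i.castSucc, by ext j; induction j using Fin.lastCases <;> simp⟩

theorem continuous_snoc : Continuous fun v : Euc d × ℝ => snoc v.1 v.2 := by
  refine (PiLp.continuous_toLp 2 _).comp (continuous_pi fun j => ?_)
  induction j using Fin.lastCases with
  | last => simpa using continuous_snd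
  | cast i =>
    simp only [Fin.snoc_castSucc]
    fun_prop

end Euc

section Segment

variable {E : Type*} [AddCommGroup E] [Module ℝ E] {a b p : E}

theorem notMem_segment_of_le (ℓ : E →ₗ[ℝ] ℝ) (ha : a ≠ p) (hpa : ℓ p ≤ ℓ a)
    (hpb : ℓ p < ℓ b) : p ∉ segment ℝ a b := by
  rintro ⟨u, v, hu, hv, huv, rfl⟩
  obtain rfl : u = 1 - v := by linarith
  rcases hv.eq_or_lt with rfl | hv
  · simp_all
  · simp only [map_add, map_smul, smul_eq_mul] at hpa hpb
    have hba : ℓ b ≤ ℓ a := by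
      by_contra! h
      nlinarith [mul_pos hv (sub_pos.2 h)]
    nlinarith [mul_nonneg hu (sub_nonneg.2 hba)]

theorem notMem_segment_of_eq (ℓ : E →ₗ[ℝ] ℝ) (hab : ℓ a = ℓ b) (hp : ℓ a ≠ ℓ p) :
    p ∉ segment ℝ a b := by
  rintro ⟨u, v, -, -, huv, rfl⟩
  simp only [map_add, map_smul, smul_eq_mul, ← hab, ← add_mul, huv, one_mul] at hp
  exact hp rfl

end Segment

theorem ContinuousMap.homotopic_of_notMem_segment {X E : Type*} [TopologicalSpace X]
    [AddCommGroup E] [TopologicalSpace E] [IsTopologicalAddGroup E] [Module ℝ E]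
    [ContinuousSMul ℝ E] {p : E} {f g : C(X, ({p}ᶜ : Set E))}
    (h : ∀ x, p ∉ segment ℝ (f x : E) (g x)) : f.Homotopic g := by
  let F := Homotopy.affine ((ContinuousMap.mk Subtype.val continuous_subtype_val).comp f)
    ((ContinuousMap.mk Subtype.val continuous_subtype_val).comp g)
  refine ⟨{ toFun := fun y => ⟨F y, fun hy => h y.2 ?_⟩,
            continuous_toFun := F.continuous.subtype_mk _,
            map_zero_left := fun x => Subtype.ext (F.apply_zero x),
            map_one_left := fun x => Subtype.ext (F.apply_one x) }⟩
  rw [← Path.range_segment]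
  exact ⟨y.1, hy⟩

namespace ContinuousMap.Homotopy

variable {V Y : Type*} [TopologicalSpace V] [TopologicalSpace Y] {W : Set V} {h : C(W, Y)}
  {c : Y}

open Classical in
def extendConst (K : h.Homotopy (ContinuousMap.const W c)) (t : ℝ) (v : V) : Y :=
  if hv : v ∈ W then K (Set.projIcc 0 1 zero_le_one t, ⟨v, hv⟩) else c

variable (K : h.Homotopy (ContinuousMap.const W c))

theorem extendConst_of_one_le {t : ℝ} (ht : 1 ≤ t) (v : V) : K.extendConst t v = c := by
  unfold extendConst
  split_ifs
  · rw [Set.projIcc_of_right_le _ ht]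
    exact K.apply_one _
  · rfl

theorem extendConst_zero {v : V} (hv : v ∈ W) : K.extendConst 0 v = h ⟨v, hv⟩ := by
  rw [extendConst, dif_pos hv, Set.projIcc_left]
  exact K.apply_zero _

theorem continuousOn_extendConst :
    ContinuousOn (fun p : ℝ × V => K.extendConst p.1 p.2) (Set.univ ×ˢ W) := by
  rw [continuousOn_iff_continuous_domRestrict]
  refine (K.continuous.comp (((continuous_projIcc (h := zero_le_one)).comp
    (continuous_fst.comp continuous_subtype_val)).prodMk
      ((continuous_snd.comp continuous_subtype_val).subtype_mk fun p => p.2.2))).congr fun p => ?_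
  simp [extendConst, dif_pos p.2.2]

end ContinuousMap.Homotopy

theorem continuous_smul_comp_of_bounded {X E F : Type*} [TopologicalSpace X]
    [TopologicalSpace E] [NormedAddCommGroup F] [NormedSpace ℝ F] {s : X → ℝ} {z : X → E}
    {K : Set E} {f : E → F} (hs : Continuous s) (hz : ∀ x, s x ≠ 0 → ContinuousAt z x)
    (hzK : ∀ x, s x ≠ 0 → z x ∈ K) (hf : ContinuousOn f K) {C : ℝ} (hC : ∀ y ∈ K, ‖f y‖ ≤ C) :
    Continuous fun x => s x • f (z x) := by
  refine continuous_iff_continuousAt.2 fun x₀ => ?_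
  by_cases h0 : s x₀ = 0
  · have hbound : ∀ x, ‖s x • f (z x)‖ ≤ C * |s x| := fun x => by
      by_cases hx : s x = 0
      · simp [hx]
      · rw [norm_smul, Real.norm_eq_abs, mul_comm]
        exact mul_le_mul_of_nonneg_right (hC _ (hzK x hx)) (abs_nonneg _)
    have hlim : Filter.Tendsto (fun x => C * |s x|) (nhds x₀) (nhds 0) := by
      simpa [h0] using (hs.abs.tendsto x₀).const_mul C
    simpa [ContinuousAt, h0] using squeeze_zero_norm hbound hlim
  · have hfz : ContinuousWithinAt (f ∘ z) Set.univ x₀ := by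
      refine (hf _ (hzK x₀ h0)).comp_of_preimage_mem_nhdsWithin (hz x₀ h0).continuousWithinAt ?_
      rw [nhdsWithin_univ]
      filter_upwards [hs.continuousAt.eventually_ne h0] with x hx using hzK x hx
    exact hs.continuousAt.smul (hfz.continuousAt Filter.univ_mem)

section Winding

variable {d N : ℕ} {f : (Fin (N+1) → ℝ) → Euc d} {S : Finset (Fin (N+1))} {p : Euc d}

theorem not_inWne_of_le (hf : ContinuousOn f (simpFaceBoundary S))
    (hp : p ∉ f '' simpFaceBoundary S) (ℓ : Euc d →ₗ[ℝ] ℝ) {c : Euc d} (hc : ℓ p < ℓ c)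
    (hℓ : ∀ x ∈ simpFaceBoundary S, ℓ p ≤ ℓ (f x)) : ¬InWne d f S p := by
  have hmaps : Set.MapsTo f (simpFaceBoundary S) {p}ᶜ := fun x hx h => hp ⟨x, hx, h⟩
  rintro (hp' | hW)
  · exact hp hp'
  refine hW ⟨⟨_, hf.mapsToRestrict hmaps⟩, ⟨c, fun h => hc.ne (congrArg ℓ h).symm⟩,
    fun _ => rfl, ContinuousMap.homotopic_of_notMem_segment fun x => ?_⟩
  exact notMem_segment_of_le ℓ (hmaps x.2) (hℓ x x.2) hc

variable (d) in
def IsWindingPart (f : (Fin (N+1) → ℝ) → Euc d) (S : Finset (Fin (N+1))) (p : Euc d) : Prop :=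
  S.Nonempty ∧ #S ≤ d + 1 ∧ (#S ≤ d → p ∈ f '' simpFace S) ∧ (#S = d + 1 → InWne d f S p)

theorem isWindingPartition_iff {q : ℕ} {P : Finset (Finset (Fin (N+1)))} :
    IsWindingPartition d q f P ↔ #P = q ∧ (∀ S ∈ P, ∀ T ∈ P, S ≠ T → Disjoint S T) ∧
      ∃ p, ∀ S ∈ P, IsWindingPart d f S p := by
  simp only [IsWindingPartition, IsWindingPart]
  constructor
  · rintro ⟨hq, hne, hcard, hdisj, p, hp⟩
    exact ⟨hq, hdisj, p, fun S hS => ⟨hne S hS, hcard S hS, hp S hS⟩⟩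
  · rintro ⟨hq, hdisj, p, hp⟩
    exact ⟨hq, fun S hS => (hp S hS).1, fun S hS => (hp S hS).2.1, hdisj, p,
      fun S hS => (hp S hS).2.2⟩

theorem IsWindingPart.le_of_forall_le (hS : IsWindingPart d f S p)
    (hf : ContinuousOn f (simpFaceBoundary S)) (ℓ : Euc d →ₗ[ℝ] ℝ) {r : ℝ}
    (h : ∀ x ∈ simpFace S, r ≤ ℓ (f x)) : r ≤ ℓ p := by
  obtain ⟨⟨j, hj⟩, hcard, hsmall, hbig⟩ := hS
  by_contra! hlt
  have himage : p ∉ f '' simpFaceBoundary S := by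
    rintro ⟨x, hx, rfl⟩
    exact hlt.not_ge (h x hx.1)
  rcases hcard.lt_or_eq with hcard | hcard
  · obtain ⟨x, hx, rfl⟩ := hsmall (by omega)
    exact hlt.not_ge (h x hx)
  · exact not_inWne_of_le hf himage ℓ (hlt.trans_le (h _ (single_mem_simpFace hj)))
      (fun x hx => hlt.le.trans (h x hx.1)) (hbig hcard)

theorem exists_isWindingPartition_of_parts {M : ℕ} (ι : Fin (N+1) ↪ Fin (M+1))
    {q : ℕ} {P : Finset (Finset (Fin (M+1)))} (hq : #P = q)
    (hP : ∀ S ∈ P, ∀ T ∈ P, S ≠ T → Disjoint S T)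
    (h : ∀ S ∈ P, ∃ T, T.map ι ⊆ S ∧ IsWindingPart d f T p) :
    ∃ P', IsWindingPartition d q f P' := by
  choose! F hFsub hF using h
  have hdisj : ∀ S ∈ P, ∀ T ∈ P, S ≠ T → Disjoint (F S) (F T) := fun S hS T hT hST =>
    (disjoint_map ι).1 ((hP S hS T hT hST).mono (hFsub S hS) (hFsub T hT))
  refine ⟨P.image F, isWindingPartition_iff.2
    ⟨(card_image_of_injOn fun S hS T hT hST => ?_).trans hq, ?_, p, ?_⟩⟩
  · by_contra hne
    obtain ⟨i, hi⟩ := (hF S hS).1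
    exact disjoint_left.1 (hdisj S hS T hT hne) hi (hST ▸ hi)
  · simp only [mem_image]
    rintro _ ⟨S, hS, rfl⟩ _ ⟨T, hT, rfl⟩ hST
    exact hdisj S hS T hT fun h => hST (h ▸ rfl)
  · simp only [mem_image]
    rintro _ ⟨S, hS, rfl⟩
    exact hF S hS

end Winding

namespace SimplexLift

variable {N M : ℕ} (ι : Fin (N+1) ↪ Fin (M+1)) (d : ℕ)

def newMass (x : Fin (M+1) → ℝ) : ℝ := ∑ j ∈ (univ.map ι)ᶜ, x j

def cutoff (x : Fin (M+1) → ℝ) : ℝ := kthLargest d (x ∘ ι)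

def truncation (x : Fin (M+1) → ℝ) : Fin (N+1) → ℝ := fun i => max (x (ι i) - cutoff ι d x) 0

def truncationMass (x : Fin (M+1) → ℝ) : ℝ := ∑ i, truncation ι d x i

def normTruncation (x : Fin (M+1) → ℝ) : Fin (N+1) → ℝ :=
  (truncationMass ι d x)⁻¹ • truncation ι d x

def height (x : Fin (M+1) → ℝ) : ℝ := newMass ι x - cutoff ι d x

def liftMap (f : (Fin (N+1) → ℝ) → Euc d) (x : Fin (M+1) → ℝ) : Euc (d+1) :=
  Euc.snoc (truncationMass ι d x • f (normTruncation ι d x)) (height ι d x)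

variable {ι d} {f : (Fin (N+1) → ℝ) → Euc d} {S : Finset (Fin (M+1))} {x : Fin (M+1) → ℝ}

@[simp]
theorem liftMap_last : liftMap ι d f x (Fin.last d) = height ι d x := by
  simp [liftMap]

theorem continuous_cutoff : Continuous (cutoff ι d) :=
  continuous_kthLargest.comp (continuous_pi fun i => continuous_apply (ι i))

theorem continuous_truncation : Continuous (truncation ι d) :=
  continuous_pi fun i => ((continuous_apply (ι i)).sub continuous_cutoff).max continuous_const

theorem continuous_truncationMass : Continuous (truncationMass ι d) :=
  continuous_finsetSum _ fun i _ => (continuous_apply i).comp continuous_truncation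

theorem continuousAt_normTruncation (hs : truncationMass ι d x ≠ 0) :
    ContinuousAt (normTruncation ι d) x :=
  (continuous_truncationMass.continuousAt.inv₀ hs).smul continuous_truncation.continuousAt

theorem continuous_height : Continuous (height ι d) :=
  (continuous_finsetSum _ fun j _ => continuous_apply j).sub continuous_cutoff

theorem card_supportFinset_normTruncation_le : #(supportFinset (normTruncation ι d x)) ≤ d := by
  refine le_trans (card_le_card fun i hi => ?_) (card_lt_kthLargest_le (x := x ∘ ι))
  simp only [mem_supportFinset, normTruncation, truncation, Pi.smul_apply, smul_eq_mul] at hi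
  simp only [mem_filter, mem_univ, true_and, Function.comp_apply]
  by_contra! h
  exact hi (by rw [max_eq_right (by unfold cutoff at *; linarith), mul_zero])

theorem normTruncation_mem_stdSimp (hs : truncationMass ι d x ≠ 0) :
    normTruncation ι d x ∈ stdSimp N := by
  refine ⟨fun i => mul_nonneg (inv_nonneg.2 (sum_nonneg fun j _ => le_max_right _ _))
    (le_max_right _ _), ?_⟩
  simp only [normTruncation, Pi.smul_apply, smul_eq_mul, ← mul_sum]
  exact inv_mul_cancel₀ hs

theorem normTruncation_mem_skel (hd : 1 ≤ d) (hs : truncationMass ι d x ≠ 0) :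
    normTruncation ι d x ∈ skel N (d - 1) :=
  mem_skel_iff.2 ⟨normTruncation_mem_stdSimp hs,
    card_supportFinset_normTruncation_le.trans (by omega)⟩

theorem continuous_liftMap (hd : 1 ≤ d) (hf : ContinuousOn f (skel N (d - 1))) :
    Continuous (liftMap ι d f) := by
  obtain ⟨C, hC⟩ := (isCompact_skel (d - 1)).exists_bound_of_continuousOn hf
  exact Euc.continuous_snoc.comp ((continuous_smul_comp_of_bounded continuous_truncationMass
    (fun _ hs => continuousAt_normTruncation hs) (fun _ hs => normTruncation_mem_skel hd hs) hf
    hC).prodMk continuous_height)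

theorem sum_comp_add_newMass (hx : x ∈ stdSimp M) : ∑ i, x (ι i) + newMass ι x = 1 := by
  rw [← hx.2, ← sum_add_sum_compl (univ.map ι), sum_map, newMass]

theorem newMass_nonneg (hx : x ∈ stdSimp M) : 0 ≤ newMass ι x :=
  sum_nonneg fun j _ => hx.1 j

theorem cutoff_nonneg (hx : x ∈ stdSimp M) : 0 ≤ cutoff ι d x :=
  kthLargest_nonneg fun i => hx.1 (ι i)

theorem cutoff_eq_zero_iff (hx : x ∈ stdSimp M) :
    cutoff ι d x = 0 ↔ #(supportFinset (x ∘ ι)) ≤ d :=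
  kthLargest_eq_zero_iff fun i => hx.1 (ι i)

theorem supportFinset_comp_subset_preimage (hx : x ∈ simpFace S) :
    supportFinset (x ∘ ι) ⊆ S.preimage ι ι.injective.injOn := fun i hi =>
  mem_preimage.2 ((mem_simpFace_iff.1 hx).2 (by simpa using hi))

theorem comp_mem_stdSimp (hx : x ∈ stdSimp M) (ht : newMass ι x = 0) : x ∘ ι ∈ stdSimp N :=
  ⟨fun i => hx.1 (ι i), by simpa [ht] using sum_comp_add_newMass (ι := ι) hx⟩

theorem newMass_eq_zero_and_cutoff_eq_zero (hx : x ∈ skel M d) (h0 : height ι d x = 0) :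
    newMass ι x = 0 ∧ cutoff ι d x = 0 := by
  have hx' := mem_skel_iff.1 hx
  suffices ht : newMass ι x = 0 from ⟨ht, by rw [height, ht] at h0; linarith⟩
  by_contra ht
  obtain ⟨j, hj, hxj⟩ := exists_ne_zero_of_sum_ne_zero ht
  have hsub : (supportFinset (x ∘ ι)).map ι ⊆ (supportFinset x).erase j := by
    simp only [subset_iff, mem_map, mem_erase, mem_supportFinset]
    rintro _ ⟨i, hi, rfl⟩
    exact ⟨fun h => by simp [← h] at hj, hi⟩
  have hcard := card_le_card hsub
  rw [card_map, card_erase_of_mem (mem_supportFinset.2 hxj)] at hcard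
  have hμ : cutoff ι d x = 0 := (cutoff_eq_zero_iff hx'.1).2 (by omega)
  exact ht (by rwa [height, hμ, sub_zero] at h0)

theorem normTruncation_eq_of_height_eq_zero (hx : x ∈ skel M d) (h0 : height ι d x = 0) :
    truncationMass ι d x = 1 ∧ normTruncation ι d x = x ∘ ι := by
  obtain ⟨ht, hμ⟩ := newMass_eq_zero_and_cutoff_eq_zero hx h0
  have hy : truncation ι d x = x ∘ ι := funext fun i => by
    simp [truncation, hμ, (mem_skel_iff.1 hx).1.1 (ι i)]
  have hs : truncationMass ι d x = 1 := by
    rw [truncationMass, hy]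
    exact (comp_mem_stdSimp (mem_skel_iff.1 hx).1 ht).2
  exact ⟨hs, by rw [normTruncation, hs, hy, inv_one, one_smul]⟩

theorem liftMap_eq_of_height_eq_zero (hx : x ∈ skel M d) (h0 : height ι d x = 0) :
    liftMap ι d f x = Euc.snoc (f (x ∘ ι)) 0 := by
  obtain ⟨hs, hz⟩ := normTruncation_eq_of_height_eq_zero hx h0
  rw [liftMap, hs, hz, one_smul, h0]

theorem comp_mem_simpFace_of_liftMap_eq {a : Euc d} (hx : x ∈ simpFace S) (hxk : x ∈ skel M d)
    (hgx : liftMap ι d f x = Euc.snoc a 0) :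
    x ∘ ι ∈ simpFace (S.preimage ι ι.injective.injOn) ∧ #(supportFinset (x ∘ ι)) ≤ d ∧
      f (x ∘ ι) = a := by
  have h0 : height ι d x = 0 := (Euc.snoc_inj.1 hgx).2
  obtain ⟨ht, hμ⟩ := newMass_eq_zero_and_cutoff_eq_zero hxk h0
  rw [liftMap_eq_of_height_eq_zero hxk h0, Euc.snoc_inj] at hgx
  exact ⟨mem_simpFace_iff.2 ⟨comp_mem_stdSimp hx.1 ht, supportFinset_comp_subset_preimage hx⟩,
    (cutoff_eq_zero_iff hx.1).1 hμ, hgx.1⟩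

theorem normTruncation_mem_simpFace (hx : x ∈ simpFace S) (hs : truncationMass ι d x ≠ 0) :
    normTruncation ι d x ∈ simpFace (S.preimage ι ι.injective.injOn) := by
  refine mem_simpFace_iff.2 ⟨normTruncation_mem_stdSimp hs, fun i hi => ?_⟩
  refine supportFinset_comp_subset_preimage hx (mem_supportFinset.2 fun hxi => ?_)
  have : truncation ι d x i = 0 :=
    max_eq_right (by rw [sub_nonpos, show x (ι i) = 0 from hxi]; exact cutoff_nonneg hx.1)
  simp [normTruncation, this] at hi

theorem normTruncation_mem_simpFaceBoundary (hx : x ∈ simpFace S)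
    (hs : truncationMass ι d x ≠ 0) (hT : d < #(S.preimage ι ι.injective.injOn)) :
    normTruncation ι d x ∈ simpFaceBoundary (S.preimage ι ι.injective.injOn) :=
  mem_simpFaceBoundary_of_card_lt (normTruncation_mem_simpFace hx hs)
    (card_supportFinset_normTruncation_le.trans_lt hT)

theorem height_nonneg (hx : x ∈ simpFace S) (hS : #(S.preimage ι ι.injective.injOn) ≤ d) :
    0 ≤ height ι d x := by
  rw [height, (cutoff_eq_zero_iff hx.1).2 ((card_le_card
    (supportFinset_comp_subset_preimage hx)).trans hS), sub_zero]
  exact newMass_nonneg hx.1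

theorem height_nonpos (hx : x ∈ simpFace S) (hS : S ⊆ univ.map ι) : height ι d x ≤ 0 := by
  have ht : newMass ι x = 0 := sum_eq_zero fun j hj => hx.2 j fun hjS => mem_compl.1 hj (hS hjS)
  rw [height, ht, zero_sub, neg_nonpos]
  exact cutoff_nonneg hx.1

section Cone

variable {a : Euc d} {W : Set (Fin (N+1) → ℝ)} {h : C(W, ({a}ᶜ : Set (Euc d)))}
  {c : ({a}ᶜ : Set (Euc d))} (K : h.Homotopy (ContinuousMap.const W c))
  {X : Set (Fin (M+1) → ℝ)}

/- The time `max u (2 - 2 s)` is at least `1` wherever `s ≤ 1/2`, in particular near the points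
where `normTruncation` is junk (`s = 0`), and there `K` has reached the constant `c`. -/
theorem continuousOn_extendConst_normTruncation
    (hW : ∀ x ∈ X, truncationMass ι d x ≠ 0 → normTruncation ι d x ∈ W) :
    ContinuousOn (fun p : ℝ × (Fin (M+1) → ℝ) =>
      K.extendConst (max p.1 (2 - 2 * truncationMass ι d p.2)) (normTruncation ι d p.2))
      (Set.univ ×ˢ X) := by
  rintro ⟨u₀, x₀⟩ ⟨-, hx₀⟩
  have hs : Continuous fun p : ℝ × (Fin (M+1) → ℝ) => truncationMass ι d p.2 :=
    continuous_truncationMass.comp continuous_snd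
  by_cases h0 : truncationMass ι d x₀ = 0
  · refine ((continuousAt_const (y := c)).congr ?_).continuousWithinAt
    filter_upwards [hs.continuousAt.eventually_lt continuousAt_const
      (show truncationMass ι d x₀ < 1 / 2 by rw [h0]; norm_num)] with p hp
    exact (K.extendConst_of_one_le (le_max_of_le_right (by linarith)) _).symm
  · have hz : ContinuousAt (normTruncation ι d ∘ Prod.snd) (u₀, x₀) :=
      (continuousAt_normTruncation h0).comp continuous_snd.continuousAt
    refine (K.continuousOn_extendConst _ ⟨trivial, hW x₀ hx₀ h0⟩).comp_of_preimage_mem_nhdsWithin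
      (((continuous_fst.max (continuous_const.sub (continuous_const.mul hs))).continuousAt.prodMk
        hz).continuousWithinAt) ?_
    filter_upwards [self_mem_nhdsWithin,
      nhdsWithin_le_nhds (hs.continuousAt.eventually_ne h0)] with p hp hp0
    exact ⟨trivial, hW p.2 hp.2 hp0⟩

def coneHomotopy (hW : ∀ x ∈ X, truncationMass ι d x ≠ 0 → normTruncation ι d x ∈ W) :
    C(unitInterval × X, ({Euc.snoc a 0}ᶜ : Set (Euc (d+1)))) where
  toFun p := ⟨Euc.snoc (K.extendConst (max p.1 (2 - 2 * truncationMass ι d p.2))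
      (normTruncation ι d p.2)) ((1 - p.1) * height ι d p.2),
    fun hp => (K.extendConst _ _).2 (Euc.snoc_inj.1 hp).1⟩
  continuous_toFun := by
    have hval : Continuous fun p : unitInterval × X => ((p.1 : ℝ), (p.2 : Fin (M+1) → ℝ)) :=
      (continuous_subtype_val.comp continuous_fst).prodMk
        (continuous_subtype_val.comp continuous_snd)
    have hK := (continuousOn_extendConst_normTruncation K hW).comp_continuous hval
      fun p => ⟨trivial, p.2.2⟩
    exact (Euc.continuous_snoc.comp ((continuous_subtype_val.comp hK).prodMk
      ((continuous_const.sub (continuous_fst.comp hval)).mul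
        (continuous_height.comp (continuous_snd.comp hval))))).subtype_mk _

variable (hW : ∀ x ∈ X, truncationMass ι d x ≠ 0 → normTruncation ι d x ∈ W)

theorem coneHomotopy_curry_zero_homotopic_const :
    ((coneHomotopy K hW).curry 0).Homotopic
      (ContinuousMap.const _ ⟨Euc.snoc c 0, fun hp => c.2 (Euc.snoc_inj.1 hp).1⟩) := by
  have h1 : (coneHomotopy K hW).curry 1 =
      ContinuousMap.const _ ⟨Euc.snoc c 0, fun hp => c.2 (Euc.snoc_inj.1 hp).1⟩ := by
    ext x : 2
    change Euc.snoc (K.extendConst (max 1 _) _ : Euc d) ((1 - 1) * _) = Euc.snoc c 0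
    rw [sub_self, zero_mul, K.extendConst_of_one_le (le_max_left _ _)]
  exact h1 ▸ ⟨⟨coneHomotopy K hW, fun _ => rfl, fun _ => rfl⟩⟩

theorem coneHomotopy_curry_zero_of_height_eq_zero {x : X} (hx : (x : Fin (M+1) → ℝ) ∈ skel M d)
    (h0 : height ι d x = 0) (hh : ∀ w, (h w : Euc d) = f w) :
    ((coneHomotopy K hW).curry 0 x : Euc (d+1)) = liftMap ι d f x := by
  obtain ⟨hs, hz⟩ := normTruncation_eq_of_height_eq_zero hx h0
  change Euc.snoc (K.extendConst (max 0 (2 - 2 * truncationMass ι d x))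
    (normTruncation ι d x) : Euc d) ((1 - 0) * height ι d x) = _
  rw [hs, hz, show max (0 : ℝ) (2 - 2 * 1) = 0 by norm_num,
    K.extendConst_zero (hz ▸ hW x x.2 (hs ▸ one_ne_zero)), hh,
    liftMap_eq_of_height_eq_zero hx h0, h0, mul_zero]

end Cone

/- First straighten `g` to the time-`0` map of the cone homotopy: both have the same height, and
where the height vanishes they coincide. -/
theorem exists_liftMap_homotopic_const (hg : Continuous (liftMap ι d f)) (hS : #S = d + 2)
    (hT : #(S.preimage ι ι.injective.injOn) = d + 1) {a : Euc d}
    (hbd : Euc.snoc a 0 ∉ liftMap ι d f '' simpFaceBoundary S)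
    {h : C(simpFaceBoundary (S.preimage ι ι.injective.injOn), ({a}ᶜ : Set (Euc d)))}
    (hh : ∀ w, (h w : Euc d) = f w) {c : ({a}ᶜ : Set (Euc d))}
    (K : h.Homotopy (ContinuousMap.const _ c)) :
    ∃ (G : C(simpFaceBoundary S, ({Euc.snoc a 0}ᶜ : Set (Euc (d+1))))) (y : _),
      (∀ x, (G x : Euc (d+1)) = liftMap ι d f x) ∧ G.Homotopic (ContinuousMap.const _ y) := by
  have hmaps : Set.MapsTo (liftMap ι d f) (simpFaceBoundary S) {Euc.snoc a 0}ᶜ :=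
    fun x hx hx' => hbd ⟨x, hx, hx'⟩
  have hW : ∀ x ∈ simpFaceBoundary S, truncationMass ι d x ≠ 0 →
      normTruncation ι d x ∈ simpFaceBoundary (S.preimage ι ι.injective.injOn) :=
    fun x hx hs => normTruncation_mem_simpFaceBoundary hx.1 hs (by omega)
  refine ⟨⟨_, hg.continuousOn.mapsToRestrict hmaps⟩, _, fun _ => rfl,
    (ContinuousMap.homotopic_of_notMem_segment fun x => ?_).trans
      (coneHomotopy_curry_zero_homotopic_const K hW)⟩
  change _ ∉ segment ℝ (liftMap ι d f x) _
  by_cases h0 : height ι d x = 0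
  · rw [coneHomotopy_curry_zero_of_height_eq_zero K hW
      (simpFaceBoundary_subset_skel hS.le x.2) h0 hh, segment_same]
    exact fun hp => hmaps x.2 hp.symm
  · refine notMem_segment_of_eq (EuclideanSpace.projₗ (Fin.last d)) ?_ (by simpa using h0)
    change liftMap ι d f x (Fin.last d) = Euc.snoc _ ((1 - 0) * height ι d x) (Fin.last d)
    rw [liftMap_last, Euc.snoc_last, sub_zero, one_mul]

theorem inWne_preimage (hg : Continuous (liftMap ι d f)) {a : Euc d} (hS : #S = d + 2)
    (hT : #(S.preimage ι ι.injective.injOn) = d + 1)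
    (hW : InWne (d+1) (liftMap ι d f) S (Euc.snoc a 0)) :
    InWne d f (S.preimage ι ι.injective.injOn) a := by
  by_cases ha : a ∈ f '' simpFaceBoundary (S.preimage ι ι.injective.injOn)
  · exact Or.inl ha
  have hbd : Euc.snoc a 0 ∉ liftMap ι d f '' simpFaceBoundary S := by
    rintro ⟨x, hx, hgx⟩
    obtain ⟨hxT, hcard, rfl⟩ :=
      comp_mem_simpFace_of_liftMap_eq hx.1 (simpFaceBoundary_subset_skel hS.le hx) hgx
    exact ha ⟨_, mem_simpFaceBoundary_of_card_lt hxT (by omega), rfl⟩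
  exact Or.inr fun ⟨_, _, hh, ⟨K⟩⟩ =>
    hW.resolve_left hbd (exists_liftMap_homotopic_const hg hS hT hbd hh K)

theorem exists_eq_snoc_zero (hg : Continuous (liftMap ι d f)) {P : Finset (Finset (Fin (M+1)))}
    {p : Euc (d+1)} (hdisj : ∀ S ∈ P, ∀ T ∈ P, S ≠ T → Disjoint S T)
    (hP : ∀ S ∈ P, IsWindingPart (d+1) (liftMap ι d f) S p)
    (hnew : M - N < #P) (hold : N + 1 < #P * (d + 1)) : ∃ a, p = Euc.snoc a 0 := by
  obtain ⟨a, ha⟩ := Euc.exists_eq_snoc p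
  refine ⟨a, ha.trans (congrArg _ (le_antisymm ?_ ?_))⟩
  · obtain ⟨S, hS, hSold⟩ : ∃ S ∈ P, S ⊆ univ.map ι := by
      by_contra! h
      have := card_mul_le_of_disjoint (t := fun S => S ∩ (univ.map ι)ᶜ) (k := 1)
        (fun S hS T hT hST => (hdisj S hS T hT hST).mono inter_subset_left inter_subset_left)
        (fun S _ => inter_subset_right) fun S hS => by
          obtain ⟨j, hjS, hj⟩ := not_subset.1 (h S hS)
          exact card_pos.2 ⟨j, mem_inter.2 ⟨hjS, mem_compl.2 hj⟩⟩
      rw [card_compl, card_map, card_univ, Fintype.card_fin, Fintype.card_fin] at this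
      omega
    simpa using (hP S hS).le_of_forall_le hg.continuousOn
      (-EuclideanSpace.projₗ (Fin.last d)) (r := 0) fun x hx => by
        simpa using height_nonpos (d := d) hx hSold
  · by_contra! hneg
    have := card_mul_le_of_disjoint (A := univ) (k := d + 1)
      (t := fun S => S.preimage ι ι.injective.injOn)
      (fun S hS T hT hST => disjoint_left.2 fun i hiS hiT =>
        disjoint_left.1 (hdisj S hS T hT hST) (mem_preimage.1 hiS) (mem_preimage.1 hiT))
      (fun _ _ => subset_univ _) fun S hS => by
        by_contra! hsmall
        exact hneg.not_ge ((hP S hS).le_of_forall_le hg.continuousOn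
          (EuclideanSpace.projₗ (Fin.last d)) fun x hx => by
            simpa using height_nonneg (d := d) hx (by omega))
    rw [card_univ, Fintype.card_fin] at this
    omega

theorem exists_windingPart_of_liftMap_eq {a : Euc d} (hx : x ∈ simpFace S)
    (hxk : x ∈ skel M d) (hgx : liftMap ι d f x = Euc.snoc a 0) :
    ∃ T, T.map ι ⊆ S ∧ IsWindingPart d f T a := by
  obtain ⟨hxT, hcard, rfl⟩ := comp_mem_simpFace_of_liftMap_eq hx hxk hgx
  exact ⟨supportFinset (x ∘ ι), map_subset_iff_subset_preimage.2 (mem_simpFace_iff.1 hxT).2,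
    supportFinset_nonempty hxT.1, by omega,
    fun _ => ⟨_, mem_simpFace_iff.2 ⟨hxT.1, subset_rfl⟩, rfl⟩, fun h => by omega⟩

theorem exists_windingPart_of_liftMap (hg : Continuous (liftMap ι d f)) {a : Euc d}
    (hS : IsWindingPart (d+1) (liftMap ι d f) S (Euc.snoc a 0)) :
    ∃ T, T.map ι ⊆ S ∧ IsWindingPart d f T a := by
  by_cases hmem : ∃ x ∈ simpFace S ∩ skel M d, liftMap ι d f x = Euc.snoc a 0
  · obtain ⟨x, ⟨hx, hxk⟩, hgx⟩ := hmem
    exact exists_windingPart_of_liftMap_eq hx hxk hgx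
  obtain ⟨-, hcard, hsmall, hbig⟩ := hS
  have hS : #S = d + 2 := by
    refine hcard.antisymm (not_lt.1 fun h => hmem ?_)
    obtain ⟨x, hx, hgx⟩ := hsmall (by omega)
    exact ⟨x, ⟨hx, simpFace_subset_skel (by omega) hx⟩, hgx⟩
  have hbd : Euc.snoc a 0 ∉ liftMap ι d f '' simpFaceBoundary S := fun ⟨x, hx, hgx⟩ =>
    hmem ⟨x, ⟨hx.1, simpFaceBoundary_subset_skel hS.le hx⟩, hgx⟩
  have hTS : (S.preimage ι ι.injective.injOn).map ι ⊆ S :=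
    map_subset_iff_subset_preimage.2 subset_rfl
  have hTcard := card_le_card hTS
  rw [card_map] at hTcard
  rcases lt_trichotomy #(S.preimage ι ι.injective.injOn) (d + 1) with h | h | h
  · refine absurd (hbig hS) (not_inWne_of_le hg.continuousOn hbd
      (EuclideanSpace.projₗ (Fin.last d)) (c := Euc.snoc 0 1) (by simp) fun x hx => ?_)
    simpa using height_nonneg hx.1 (by omega)
  · exact ⟨_, hTS, card_pos.1 (by omega), h.le, fun h' => by omega,
      fun _ => inWne_preimage hg hS h (hbig hS)⟩
  · have hSold : S ⊆ univ.map ι := by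
      rw [← eq_of_subset_of_card_le hTS (by rw [card_map]; omega)]
      exact map_subset_map.2 (subset_univ _)
    refine absurd (hbig hS) (not_inWne_of_le hg.continuousOn hbd
      (-EuclideanSpace.projₗ (Fin.last d)) (c := Euc.snoc 0 (-1)) (by simp) fun x hx => ?_)
    simpa using height_nonpos (d := d) hx.1 hSold

end SimplexLift

/-- If the Winding Number Conjecture holds in dimension `d + 1`,
then it also holds in dimension `d`. -/
theorem winding_dim_reduction (d q : ℕ) (hd : 1 ≤ d) (hq : 1 ≤ q)
    (H : ∀ g : (Fin ((d+2)*(q-1)+1) → ℝ) → Euc (d+1),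
      ContinuousOn g (skel ((d+2)*(q-1)) d) →
      ∃ P : Finset (Finset (Fin ((d+2)*(q-1)+1))), IsWindingPartition (d+1) q g P) :
    ∀ f : (Fin ((d+1)*(q-1)+1) → ℝ) → Euc d,
      ContinuousOn f (skel ((d+1)*(q-1)) (d-1)) →
      ∃ P : Finset (Finset (Fin ((d+1)*(q-1)+1))), IsWindingPartition d q f P := by
  intro f hf
  let ι := Fin.castLEEmb (show (d+1)*(q-1) + 1 ≤ (d+2)*(q-1) + 1 by gcongr; omega)
  have hg := SimplexLift.continuous_liftMap (ι := ι) hd hf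
  obtain ⟨P, hP⟩ := H _ hg.continuousOn
  obtain ⟨hcard, hdisj, p, hparts⟩ := isWindingPartition_iff.1 hP
  obtain ⟨e, he⟩ : ∃ e, q = e + 1 := ⟨q - 1, by omega⟩
  obtain ⟨a, rfl⟩ := SimplexLift.exists_eq_snoc_zero hg hdisj hparts
    (by rw [hcard, ← Nat.sub_mul]; simp; omega)
    (by rw [hcard, he, Nat.add_sub_cancel]; nlinarith)
  exact exists_isWindingPartition_of_parts ι hcard hdisj fun S hS =>
    SimplexLift.exists_windingPart_of_liftMap hg (hparts S hS)
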